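/- arXiv:1705.01867 — 5 statements merged into one kernel-verified Lean document; each statement's English description precedes it below -/
import Mathlib

section
/- Let δ > 0, let ν ∈ ℝ^d be a unit vector, and let h > 0. Then the image under Φ_δ of the half-space H_{ν,h} = {x ∈ ℝ^d : ⟨x, ν⟩ ≤ h} equals the intersection of the open ball of radius δ^{-1/2} centered at the origin with the closed ball of radius √(1/(4δ²h²) + 1/δ) centered at the point −(1/(2δh))·ν. -/
/-!
Writing `y = Φ_δ(x)`, the root equation `φ + δ|x|²φ² = 1` gives `1 - δ|y|² = φ_δ(|x|) > 0`, so
`Φ_δ` maps `ℝ^d` bijectively onto the open ball `δ|y|² < 1`, with inverse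
`y ↦ (1 - δ|y|²)⁻¹ y`. Hence `⟨x, ν⟩ ≤ h` becomes `⟨y, ν⟩ ≤ h (1 - δ|y|²)`, and completing the
square in `δ h |y|² + ⟨y, ν⟩ ≤ h` turns this into the closed ball of the statement.
-/

open scoped RealInnerProductSpace

/-- For `δ > 0`, `φ_δ(r) = 2 / (1 + √(1 + 4δr²))`, the unique positive root of
`φ + δr²φ² = 1`. -/
noncomputable def phi (δ r : ℝ) : ℝ := 2 / (1 + Real.sqrt (1 + 4 * δ * r ^ 2))

/-- The map `Φ_δ : ℝ^d → ℝ^d`, `Φ_δ(x) = φ_δ(|x|) • x`. -/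
noncomputable def Phi (δ : ℝ) {d : ℕ} (x : EuclideanSpace ℝ (Fin d)) :
    EuclideanSpace ℝ (Fin d) := phi δ ‖x‖ • x

lemma phi_pos (δ r : ℝ) : 0 < phi δ r := by
  have := Real.sqrt_nonneg (1 + 4 * δ * r ^ 2)
  unfold phi
  positivity

lemma phi_add_mul_sq_eq_one {δ : ℝ} (hδ : 0 ≤ δ) (r : ℝ) :
    phi δ r + δ * r ^ 2 * phi δ r ^ 2 = 1 := by
  have hs := Real.sq_sqrt (show 0 ≤ 1 + 4 * δ * r ^ 2 by positivity)
  have hs0 := Real.sqrt_nonneg (1 + 4 * δ * r ^ 2)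
  unfold phi
  field_simp
  nlinarith

lemma eq_phi_of_add_mul_sq_eq_one {δ r t : ℝ} (hδ : 0 ≤ δ) (ht : 0 < t)
    (h : t + δ * r ^ 2 * t ^ 2 = 1) : t = phi δ r := by
  have hφ := phi_add_mul_sq_eq_one hδ r
  have hpos : 0 < 1 + δ * r ^ 2 * (t + phi δ r) := by
    have := phi_pos δ r
    positivity
  have hfac : (t - phi δ r) * (1 + δ * r ^ 2 * (t + phi δ r)) = 0 := by linear_combination h - hφ
  linarith [(mul_eq_zero.mp hfac).resolve_right hpos.ne']

section Phi

variable {δ : ℝ} {d : ℕ}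

lemma one_sub_mul_norm_Phi_sq (hδ : 0 ≤ δ) (x : EuclideanSpace ℝ (Fin d)) :
    1 - δ * ‖Phi δ x‖ ^ 2 = phi δ ‖x‖ := by
  have hφ := phi_add_mul_sq_eq_one hδ ‖x‖
  rw [Phi, norm_smul, Real.norm_of_nonneg (phi_pos δ ‖x‖).le]
  linear_combination -hφ

lemma Phi_inv_smul (hδ : 0 ≤ δ) {y : EuclideanSpace ℝ (Fin d)} (hy : δ * ‖y‖ ^ 2 < 1) :
    Phi δ ((1 - δ * ‖y‖ ^ 2)⁻¹ • y) = y := by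
  set c := 1 - δ * ‖y‖ ^ 2
  have hc : 0 < c := sub_pos.mpr hy
  have hcφ : c = phi δ ‖c⁻¹ • y‖ := by
    refine eq_phi_of_add_mul_sq_eq_one hδ hc ?_
    rw [norm_smul, Real.norm_of_nonneg (inv_pos.mpr hc).le]
    field_simp
    ring
  rw [Phi, ← hcφ, smul_smul, mul_inv_cancel₀ hc.ne', one_smul]

lemma mem_image_Phi_iff (hδ : 0 ≤ δ) {s : Set (EuclideanSpace ℝ (Fin d))}
    {y : EuclideanSpace ℝ (Fin d)} :
    y ∈ Phi δ '' s ↔ δ * ‖y‖ ^ 2 < 1 ∧ (1 - δ * ‖y‖ ^ 2)⁻¹ • y ∈ s := by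
  constructor
  · rintro ⟨x, hx, rfl⟩
    have hφ := one_sub_mul_norm_Phi_sq hδ x
    have hφpos := phi_pos δ ‖x‖
    refine ⟨by linarith, ?_⟩
    rwa [hφ, Phi, smul_smul, inv_mul_cancel₀ hφpos.ne', one_smul]
  · rintro ⟨hy, hys⟩
    exact ⟨_, hys, Phi_inv_smul hδ hy⟩

end Phi

section Balls

variable {E : Type*} [NormedAddCommGroup E]

lemma mem_ball_zero_inv_sqrt_iff {δ : ℝ} (hδ : 0 < δ) {y : E} :
    y ∈ Metric.ball 0 ((Real.sqrt δ)⁻¹) ↔ δ * ‖y‖ ^ 2 < 1 := by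
  rw [mem_ball_zero_iff, ← Real.sqrt_inv, Real.lt_sqrt (norm_nonneg y), ← one_div,
    lt_div_iff₀ hδ, mul_comm]

variable [InnerProductSpace ℝ E]

lemma mem_closedBall_iff_inner_le {δ h : ℝ} (hδ : 0 < δ) (hh : 0 < h) {ν : E} (hν : ‖ν‖ = 1)
    {y : E} :
    y ∈ Metric.closedBall (-(1 / (2 * δ * h)) • ν)
        (Real.sqrt (1 / (4 * δ ^ 2 * h ^ 2) + 1 / δ)) ↔
      ⟪y, ν⟫ ≤ h * (1 - δ * ‖y‖ ^ 2) := by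
  have hdist : dist y (-(1 / (2 * δ * h)) • ν) ^ 2
      = ‖y‖ ^ 2 + 1 / (δ * h) * ⟪y, ν⟫ + 1 / (4 * δ ^ 2 * h ^ 2) := by
    rw [dist_eq_norm, neg_smul, sub_neg_eq_add, norm_add_sq_real, real_inner_smul_right,
      norm_smul, hν, Real.norm_of_nonneg (by positivity)]
    field_simp
    ring
  rw [Metric.mem_closedBall, Real.le_sqrt dist_nonneg (by positivity), hdist]
  have hδh : 0 < δ * h := by positivity
  constructor <;> intro hle
  · have := mul_le_mul_of_nonneg_left hle hδh.le
    field_simp at this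
    nlinarith
  · rw [← sub_nonneg] at hle ⊢
    have key : 1 / (4 * δ ^ 2 * h ^ 2) + 1 / δ
        - (‖y‖ ^ 2 + 1 / (δ * h) * ⟪y, ν⟫ + 1 / (4 * δ ^ 2 * h ^ 2))
        = 1 / (δ * h) * (h * (1 - δ * ‖y‖ ^ 2) - ⟪y, ν⟫) := by
      field_simp
      ring
    rw [key]
    positivity

end Balls

/-- The image under `Φ_δ` of the half-space `{x : ⟨x, ν⟩ ≤ h}` equals the intersection of
the open ball of radius `δ^{-1/2}` centered at the origin with the closed ball of radius
`√(1/(4δ²h²) + 1/δ)` centered at `-(1/(2δh)) • ν`. -/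
theorem stmt4 (d : ℕ) (δ h : ℝ) (hδ : 0 < δ) (hh : 0 < h)
    (ν : EuclideanSpace ℝ (Fin d)) (hν : ‖ν‖ = 1) :
    Phi δ '' {x : EuclideanSpace ℝ (Fin d) | ⟪x, ν⟫ ≤ h} =
      Metric.ball 0 ((Real.sqrt δ)⁻¹) ∩
        Metric.closedBall (-(1 / (2 * δ * h)) • ν)
          (Real.sqrt (1 / (4 * δ ^ 2 * h ^ 2) + 1 / δ)) := by
  ext y
  rw [mem_image_Phi_iff hδ.le, Set.mem_inter_iff, mem_ball_zero_inv_sqrt_iff hδ,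
    mem_closedBall_iff_inner_le hδ hh hν, Set.mem_ofPred_eq, real_inner_smul_left]
  refine and_congr_right fun hy => ?_
  rw [inv_mul_le_iff₀ (sub_pos.mpr hy), mul_comm]
end

section
/- Let δ ∈ (0, 1/2), ε ∈ (0, 1/2), and let r ≥ 0 satisfy 2δr² ≤ 1/2. Then (1−ε)·φ_δ((1−ε)r) ≤ (1 − ε/2)·φ_δ(r). -/
open Real

lemma sqrt_sub_sqrt_le_half_sub {x y : ℝ} (hy : 1 ≤ y) (hyx : y ≤ x) :
    √x - √y ≤ (x - y) / 2 := by
  have hx_sq := mul_self_sqrt (by linarith : (0 : ℝ) ≤ x)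
  have hy_sq := mul_self_sqrt (by linarith : (0 : ℝ) ≤ y)
  have hy_one : 1 ≤ √y := one_le_sqrt.mpr hy
  have hyx_sqrt : √y ≤ √x := sqrt_le_sqrt hyx
  -- `x - y = (√x - √y)(√x + √y)` with `√x + √y ≥ 2`
  nlinarith

lemma sq_one_sub_mul_le_self {s ε : ℝ} (hs : 0 ≤ s) (hε : 0 ≤ ε) (hε2 : ε ≤ 2) :
    (1 - ε) ^ 2 * s ≤ s := by
  nlinarith [mul_nonneg (mul_nonneg hε (by linarith : (0 : ℝ) ≤ 2 - ε)) hs]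

lemma sqrt_one_add_sub_sqrt_one_add_sq_mul_le {s ε : ℝ} (hs : 0 ≤ s) (hs1 : s ≤ 1)
    (hε : 0 ≤ ε) (hε2 : ε ≤ 2) :
    √(1 + s) - √(1 + (1 - ε) ^ 2 * s) ≤ ε := by
  have hshrink := sq_one_sub_mul_le_self hs hε hε2
  calc √(1 + s) - √(1 + (1 - ε) ^ 2 * s)
      ≤ ((1 + s) - (1 + (1 - ε) ^ 2 * s)) / 2 :=
        sqrt_sub_sqrt_le_half_sub (le_add_of_nonneg_right (by positivity)) (by linarith)
    _ = ε * ((2 - ε) * s / 2) := by ring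
    _ ≤ ε * 1 := by gcongr; nlinarith
    _ = ε := mul_one ε

lemma one_sub_mul_one_add_le_of_sub_le {a b ε : ℝ} (hb : 1 ≤ b) (hba : b ≤ a)
    (hab : a - b ≤ ε) :
    (1 - ε) * (1 + a) ≤ (1 - ε / 2) * (1 + b) := by
  nlinarith [mul_nonneg (by linarith : (0 : ℝ) ≤ ε) (by linarith : (0 : ℝ) ≤ a - b),
    mul_nonneg (by linarith : (0 : ℝ) ≤ ε) (by linarith : (0 : ℝ) ≤ a - 1)]

theorem stmt5_general (δ ε r : ℝ) (hδ : 0 < δ)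
    (hε : 0 < ε) (hε2 : ε < 1 / 2) (h2 : 2 * δ * r ^ 2 ≤ 1 / 2) :
    (1 - ε) * phi δ ((1 - ε) * r) ≤ (1 - ε / 2) * phi δ r := by
  set s := 4 * δ * r ^ 2
  have hs : 0 ≤ s := by positivity
  have hscaled : 4 * δ * ((1 - ε) * r) ^ 2 = (1 - ε) ^ 2 * s := by ring
  have hgap := sqrt_one_add_sub_sqrt_one_add_sq_mul_le hs (by linarith) hε.le (by linarith)
  have hb : 1 ≤ √(1 + (1 - ε) ^ 2 * s) :=
    one_le_sqrt.mpr (le_add_of_nonneg_right (by positivity))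
  have hba : √(1 + (1 - ε) ^ 2 * s) ≤ √(1 + s) :=
    sqrt_le_sqrt (by linarith [sq_one_sub_mul_le_self hs hε.le (by linarith)])
  have key := one_sub_mul_one_add_le_of_sub_le hb hba hgap
  unfold phi
  rw [hscaled, mul_div_assoc', mul_div_assoc', div_le_div_iff₀ (by positivity) (by positivity)]
  linear_combination 2 * key

/-- Let `δ, ε ∈ (0, 1/2)` and `r ≥ 0` with `2δr² ≤ 1/2`. Then
`(1-ε)·φ_δ((1-ε)r) ≤ (1-ε/2)·φ_δ(r)`. -/
theorem stmt5 (δ ε r : ℝ) (hδ : 0 < δ) (hδ2 : δ < 1 / 2)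
    (hε : 0 < ε) (hε2 : ε < 1 / 2) (hr : 0 ≤ r) (h2 : 2 * δ * r ^ 2 ≤ 1 / 2) :
    (1 - ε) * phi δ ((1 - ε) * r) ≤ (1 - ε / 2) * phi δ r :=
  stmt5_general δ ε r hδ hε hε2 h2
end

section
/- Let ε ∈ (0, 1/2), R > 0, and let K ⊆ ℝ^d be a convex body with 0 ∈ K ⊆ d²B. Let x ∈ ∂K, let ν be an outer unit normal to K at x, and suppose K is contained in the closed ball of radius R centered at x − Rν. If y ∈ K satisfies ⟨y, ν⟩ ≥ (1−ε)⟨x, ν⟩, then |y − x| ≤ √(2R) · d · √ε. -/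
open scoped RealInnerProductSpace

/-!
If `K` lies in the ball of radius `R` internally tangent at `x` to the supporting hyperplane
`⟪·, ν⟫ = ⟪x, ν⟫`, then a point of `K` at depth `δ` below that hyperplane lies in a cap of that
ball, hence within `√(2Rδ)` of `x`. Since `0 ∈ K ⊆ d²B`, the cap condition gives depth
`δ ≤ ε ⟪x, ν⟫ ≤ ε d²`.
-/

section InnerProductSpace

variable {E : Type*} [NormedAddCommGroup E] [InnerProductSpace ℝ E]

theorem sq_norm_sub_le_of_mem_closedBall_sub_smul {x y ν : E} {R : ℝ} (hν : ‖ν‖ = 1)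
    (hy : y ∈ Metric.closedBall (x - R • ν) R) : ‖y - x‖ ^ 2 ≤ 2 * R * ⟪x - y, ν⟫ := by
  rw [Metric.mem_closedBall, dist_eq_norm, sub_sub_eq_add_sub, add_sub_right_comm] at hy
  have hsq : ‖y - x + R • ν‖ ^ 2 ≤ R ^ 2 := pow_le_pow_left₀ (norm_nonneg _) hy 2
  rw [norm_add_sq_real, norm_smul, mul_pow, Real.norm_eq_abs, sq_abs, hν, one_pow,
    real_inner_smul_right] at hsq
  rw [← neg_sub y x, inner_neg_left]
  linarith

theorem norm_sub_le_of_mem_closedBall_sub_smul {x y ν : E} {R δ : ℝ} (hν : ‖ν‖ = 1)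
    (hy : y ∈ Metric.closedBall (x - R • ν) R) (hδ : ⟪x - y, ν⟫ ≤ δ) :
    ‖y - x‖ ≤ √(2 * R) * √δ := by
  have hR : 0 ≤ R := Metric.nonempty_closedBall.mp ⟨y, hy⟩
  rw [← Real.sqrt_mul (by positivity), ← Real.sqrt_sq (norm_nonneg (y - x))]
  gcongr
  calc ‖y - x‖ ^ 2 ≤ 2 * R * ⟪x - y, ν⟫ := sq_norm_sub_le_of_mem_closedBall_sub_smul hν hy
    _ ≤ 2 * R * δ := by gcongr

end InnerProductSpace

theorem stmt13_general (d : ℕ) (ε R : ℝ) (hε : 0 < ε)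
    (K : Set (EuclideanSpace ℝ (Fin d)))
    (hKcomp : IsCompact K)
    (h0 : (0 : EuclideanSpace ℝ (Fin d)) ∈ K)
    (hKB : K ⊆ Metric.closedBall 0 ((d : ℝ) ^ 2))
    (x ν : EuclideanSpace ℝ (Fin d)) (hx : x ∈ frontier K)
    (hνu : ‖ν‖ = 1) (hν : ∀ y ∈ K, ⟪y, ν⟫ ≤ ⟪x, ν⟫)
    (hKQ : K ⊆ Metric.closedBall (x - R • ν) R)
    (y : EuclideanSpace ℝ (Fin d)) (hy : y ∈ K)
    (hcap : (1 - ε) * ⟪x, ν⟫ ≤ ⟪y, ν⟫) :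
    ‖y - x‖ ≤ Real.sqrt (2 * R) * d * Real.sqrt ε := by
  have hxK : x ∈ K := hKcomp.isClosed.frontier_subset hx
  have hxν_nonneg : 0 ≤ ⟪x, ν⟫ := by simpa using hν 0 h0
  have hxν_le : ⟪x, ν⟫ ≤ (d : ℝ) ^ 2 :=
    (real_inner_le_norm x ν).trans (by simpa [hνu] using hKB hxK)
  have hdepth : ⟪x - y, ν⟫ ≤ ε * (d : ℝ) ^ 2 := by
    rw [inner_sub_left]
    nlinarith
  calc ‖y - x‖ ≤ √(2 * R) * √(ε * (d : ℝ) ^ 2) :=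
        norm_sub_le_of_mem_closedBall_sub_smul hνu (hKQ hy) hdepth
    _ = √(2 * R) * d * √ε := by
        rw [Real.sqrt_mul' _ (sq_nonneg _), Real.sqrt_sq (Nat.cast_nonneg d)]
        ring

/-- Let `ε ∈ (0,1/2)`, `R > 0`, and `K ⊆ ℝ^d` a convex body with `0 ∈ K ⊆ d²B`. Let
`x ∈ ∂K`, `ν` an outer unit normal to `K` at `x`, and assume `K` is contained in the
closed ball of radius `R` centered at `x − Rν`. If `y ∈ K` satisfies
`⟨y, ν⟩ ≥ (1−ε)⟨x, ν⟩`, then `|y − x| ≤ √(2R)·d·√ε`. -/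
theorem stmt13 (d : ℕ) (ε R : ℝ) (hε : 0 < ε) (hε2 : ε < 1 / 2) (hR : 0 < R)
    (K : Set (EuclideanSpace ℝ (Fin d)))
    (hKcomp : IsCompact K) (hKconv : Convex ℝ K) (hKint : (interior K).Nonempty)
    (h0 : (0 : EuclideanSpace ℝ (Fin d)) ∈ K)
    (hKB : K ⊆ Metric.closedBall 0 ((d : ℝ) ^ 2))
    (x ν : EuclideanSpace ℝ (Fin d)) (hx : x ∈ frontier K)
    (hνu : ‖ν‖ = 1) (hν : ∀ y ∈ K, ⟪y, ν⟫ ≤ ⟪x, ν⟫)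
    (hKQ : K ⊆ Metric.closedBall (x - R • ν) R)
    (y : EuclideanSpace ℝ (Fin d)) (hy : y ∈ K)
    (hcap : (1 - ε) * ⟪x, ν⟫ ≤ ⟪y, ν⟫) :
    ‖y - x‖ ≤ Real.sqrt (2 * R) * d * Real.sqrt ε :=
  stmt13_general d ε R hε K hKcomp h0 hKB x ν hx hνu hν hKQ y hy hcap
end

section
/- Let ε, ρ ∈ (0, 1/2) and let K ⊆ ℝ^d be a convex body with (1/2)B ⊆ K ⊆ d²B. Let x, x', y ∈ ∂K, and let ν and ν' be outer unit normals to K at x and x' respectively. Assume |x − x'|² + |ν − ν'|² ≤ ρ² and ⟨y, ν⟩ ≥ (1 − ε/2)⟨x, ν⟩. Then ⟨y, ν'⟩ ≥ (1 − ε/2 − 2ρ(ρ + εd² + |y − x|))·⟨x', ν'⟩. -/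
open scoped RealInnerProductSpace

/-!
Write `h = ⟪x, ν⟫` and `h' = ⟪x', ν'⟫` for the support values. Moving from `ν` to `ν'` costs
`⟪y - x', ν' - ν⟫ ≥ -‖y - x'‖ ρ`, and the support property at `x` gives `⟪x', ν⟫ ≤ h`, so
`⟪y, ν'⟫ ≥ h' - (ε / 2) h - (‖y - x‖ + ρ) ρ`. The support property at `x'` together with
`‖x‖ ≤ d²` gives `h ≤ h' + d² ρ`, and the inner ball gives `h' ≥ 1 / 2`, which turns the
additive error into the multiplicative one of the statement.
-/

section SupportValues

variable {E : Type*} [NormedAddCommGroup E] [InnerProductSpace ℝ E]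

lemma le_inner_of_closedBall_subset {K : Set E} {r : ℝ} (hr : 0 ≤ r)
    (hK : Metric.closedBall 0 r ⊆ K) {x ν : E} (hν₁ : ‖ν‖ = 1)
    (hν : ∀ z ∈ K, ⟪z, ν⟫ ≤ ⟪x, ν⟫) : r ≤ ⟪x, ν⟫ := by
  have hrν : r • ν ∈ K := hK (by simp [norm_smul, hν₁, abs_of_nonneg hr])
  simpa [real_inner_smul_left, real_inner_self_eq_norm_sq, hν₁] using hν _ hrν

lemma inner_sub_inner_le_norm_mul_norm_sub {x x' ν ν' : E} (h : ⟪x, ν'⟫ ≤ ⟪x', ν'⟫) :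
    ⟪x, ν⟫ - ⟪x', ν'⟫ ≤ ‖x‖ * ‖ν - ν'‖ :=
  calc ⟪x, ν⟫ - ⟪x', ν'⟫ ≤ ⟪x, ν⟫ - ⟪x, ν'⟫ := by linarith
    _ = ⟪x, ν - ν'⟫ := (inner_sub_right x ν ν').symm
    _ ≤ ‖x‖ * ‖ν - ν'‖ := real_inner_le_norm x (ν - ν')

lemma inner_add_inner_sub_inner_le {x x' y ν ν' : E} (h : ⟪x', ν⟫ ≤ ⟪x, ν⟫) :
    ⟪y, ν⟫ + ⟪x', ν'⟫ - ⟪x, ν⟫ - ‖y - x'‖ * ‖ν - ν'‖ ≤ ⟪y, ν'⟫ := by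
  have hcross : ⟪y - x', ν' - ν⟫ = ⟪y, ν'⟫ - ⟪y, ν⟫ - ⟪x', ν'⟫ + ⟪x', ν⟫ := by
    simp only [inner_sub_left, inner_sub_right]; ring
  have hcs : -(‖y - x'‖ * ‖ν - ν'‖) ≤ ⟪y - x', ν' - ν⟫ := by
    rw [norm_sub_rev ν]
    exact neg_le_of_abs_le (abs_real_inner_le_norm _ _)
  linarith

end SupportValues

theorem stmt14_general (d : ℕ) (ε ρ : ℝ) (hε : 0 < ε)
    (hρ : 0 < ρ)
    (K : Set (EuclideanSpace ℝ (Fin d)))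
    (hKcomp : IsCompact K)
    (hBK : Metric.closedBall 0 (1 / 2) ⊆ K)
    (hKB : K ⊆ Metric.closedBall 0 ((d : ℝ) ^ 2))
    (x x' y ν ν' : EuclideanSpace ℝ (Fin d))
    (hx : x ∈ frontier K) (hx' : x' ∈ frontier K)
    (hν : ∀ z ∈ K, ⟪z, ν⟫ ≤ ⟪x, ν⟫)
    (hν'u : ‖ν'‖ = 1) (hν' : ∀ z ∈ K, ⟪z, ν'⟫ ≤ ⟪x', ν'⟫)
    (hclose : ‖x - x'‖ ^ 2 + ‖ν - ν'‖ ^ 2 ≤ ρ ^ 2)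
    (hcap : (1 - ε / 2) * ⟪x, ν⟫ ≤ ⟪y, ν⟫) :
    (1 - ε / 2 - 2 * ρ * (ρ + ε * (d : ℝ) ^ 2 + ‖y - x‖)) * ⟪x', ν'⟫ ≤ ⟪y, ν'⟫ := by
  have hxK : x ∈ K := hKcomp.isClosed.frontier_subset hx
  have hx'K : x' ∈ K := hKcomp.isClosed.frontier_subset hx'
  have hh' : 1 / 2 ≤ ⟪x', ν'⟫ := le_inner_of_closedBall_subset (by norm_num) hBK hν'u hν'
  have hxx' : ‖x - x'‖ ≤ ρ := by nlinarith [norm_nonneg (x - x'), sq_nonneg ‖ν - ν'‖]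
  have hνν' : ‖ν - ν'‖ ≤ ρ := by nlinarith [norm_nonneg (ν - ν'), sq_nonneg ‖x - x'‖]
  have hxd : ‖x‖ ≤ (d : ℝ) ^ 2 := by simpa using hKB hxK
  have hshift : ⟪x, ν⟫ ≤ ⟪x', ν'⟫ + (d : ℝ) ^ 2 * ρ := by
    have := inner_sub_inner_le_norm_mul_norm_sub (ν := ν) (hν' x hxK)
    have : ‖x‖ * ‖ν - ν'‖ ≤ (d : ℝ) ^ 2 * ρ := mul_le_mul hxd hνν' (norm_nonneg _) (by positivity)
    linarith
  have hyx' : ‖y - x'‖ ≤ ‖y - x‖ + ρ :=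
    (norm_sub_le_norm_sub_add_norm_sub y x x').trans (by linarith)
  have hlower : ⟪x', ν'⟫ - ε / 2 * ⟪x, ν⟫ - (‖y - x‖ + ρ) * ρ ≤ ⟪y, ν'⟫ := by
    have := inner_add_inner_sub_inner_le (y := y) (ν' := ν') (hν x' hx'K)
    have : ‖y - x'‖ * ‖ν - ν'‖ ≤ (‖y - x‖ + ρ) * ρ :=
      mul_le_mul hyx' hνν' (norm_nonneg _) (by positivity)
    linarith
  have herror : ρ * (ρ + ε * (d : ℝ) ^ 2 + ‖y - x‖)
      ≤ 2 * ρ * (ρ + ε * (d : ℝ) ^ 2 + ‖y - x‖) * ⟪x', ν'⟫ := by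
    have : 0 ≤ ρ * (ρ + ε * (d : ℝ) ^ 2 + ‖y - x‖) := by positivity
    nlinarith
  linarith [mul_le_mul_of_nonneg_left hshift (by positivity : (0 : ℝ) ≤ ε / 2),
    (by positivity : (0 : ℝ) ≤ ε * (d : ℝ) ^ 2 * ρ)]

/-- Let `ε, ρ ∈ (0,1/2)` and `K ⊆ ℝ^d` a convex body with `(1/2)B ⊆ K ⊆ d²B`. Let
`x, x', y ∈ ∂K` and `ν, ν'` outer unit normals at `x, x'`. If
`|x − x'|² + |ν − ν'|² ≤ ρ²` and `⟨y, ν⟩ ≥ (1 − ε/2)⟨x, ν⟩`, then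
`⟨y, ν'⟩ ≥ (1 − ε/2 − 2ρ(ρ + εd² + |y − x|))·⟨x', ν'⟩`. -/
theorem stmt14 (d : ℕ) (ε ρ : ℝ) (hε : 0 < ε) (hε2 : ε < 1 / 2)
    (hρ : 0 < ρ) (hρ2 : ρ < 1 / 2)
    (K : Set (EuclideanSpace ℝ (Fin d)))
    (hKcomp : IsCompact K) (hKconv : Convex ℝ K) (hKint : (interior K).Nonempty)
    (hBK : Metric.closedBall 0 (1 / 2) ⊆ K)
    (hKB : K ⊆ Metric.closedBall 0 ((d : ℝ) ^ 2))
    (x x' y ν ν' : EuclideanSpace ℝ (Fin d))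
    (hx : x ∈ frontier K) (hx' : x' ∈ frontier K) (hy : y ∈ frontier K)
    (hνu : ‖ν‖ = 1) (hν : ∀ z ∈ K, ⟪z, ν⟫ ≤ ⟪x, ν⟫)
    (hν'u : ‖ν'‖ = 1) (hν' : ∀ z ∈ K, ⟪z, ν'⟫ ≤ ⟪x', ν'⟫)
    (hclose : ‖x - x'‖ ^ 2 + ‖ν - ν'‖ ^ 2 ≤ ρ ^ 2)
    (hcap : (1 - ε / 2) * ⟪x, ν⟫ ≤ ⟪y, ν⟫) :
    (1 - ε / 2 - 2 * ρ * (ρ + ε * (d : ℝ) ^ 2 + ‖y - x‖)) * ⟪x', ν'⟫ ≤ ⟪y, ν'⟫ :=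
  stmt14_general d ε ρ hε hρ K hKcomp hBK hKB x x' y ν ν' hx hx' hν hν'u hν' hclose hcap
end

section
/- Let (U, μ) be a probability space and let S_1, …, S_N be measurable subsets of U such that μ(S_i) ≥ θ for all i = 1, …, N, where θ > 0. Then there exists a finite set Y ⊆ U of cardinality at most ⌈θ^{-1} log(Nθ)⌉ + θ^{-1} such that Y ∩ S_i ≠ ∅ for every i = 1, …, N. -/
/-!
Rogers' greedy covering argument. Averaging the indicators of the uncovered sets over `μ`
yields a point lying in at least a `θ`-fraction of them, so adding it leaves at most a
`(1 - θ)`-fraction uncovered. After `m = ⌈θ⁻¹ log (Nθ)⌉` greedy steps at most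
`N (1 - θ)^m ≤ N e^{-θ m} ≤ θ⁻¹` sets remain, and one point from each of these finishes the cover.
-/

open MeasureTheory Finset
open scoped Classical

section RogersCovering

variable {U ι : Type*}

theorem exists_mul_card_le_card_filter_mem [MeasurableSpace U] (μ : Measure U)
    [IsProbabilityMeasure μ] {S : ι → Set U} (hmeas : ∀ i, MeasurableSet (S i)) {θ : ℝ}
    (hS : ∀ i, θ ≤ μ.real (S i)) (T : Finset ι) :
    ∃ x, θ * #T ≤ #{i ∈ T | x ∈ S i} := by
  have hint : ∀ i ∈ T, Integrable ((S i).indicator (1 : U → ℝ)) μ := fun i _ =>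
    (integrable_const (1 : ℝ)).indicator (hmeas i)
  obtain ⟨x, hx⟩ := exists_integral_le (integrable_finsetSum T hint)
  refine ⟨x, ?_⟩
  calc θ * #T = ∑ i ∈ T, θ := by simp [mul_comm]
    _ ≤ ∑ i ∈ T, μ.real (S i) := sum_le_sum fun i _ => hS i
    _ = ∫ y, ∑ i ∈ T, (S i).indicator 1 y ∂μ := by
      rw [integral_finsetSum T hint]
      simp only [integral_indicator_one (hmeas _)]
    _ ≤ ∑ i ∈ T, (S i).indicator 1 x := hx
    _ = #{i ∈ T | x ∈ S i} := by simp [Set.indicator_apply, sum_boole]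

section Uncovered

variable [Fintype ι]

noncomputable def uncovered (S : ι → Set U) (Y : Finset U) : Finset ι :=
  {i | ∀ y ∈ Y, y ∉ S i}

theorem uncovered_insert (S : ι → Set U) (Y : Finset U) (x : U) :
    uncovered S (insert x Y) = {i ∈ uncovered S Y | x ∉ S i} := by
  ext i
  simp only [uncovered, mem_filter, mem_univ, true_and, mem_insert, forall_eq_or_imp]
  tauto

theorem exists_card_le_card_uncovered_le [MeasurableSpace U] (μ : Measure U)
    [IsProbabilityMeasure μ] {S : ι → Set U} (hmeas : ∀ i, MeasurableSet (S i)) {θ : ℝ}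
    (hS : ∀ i, θ ≤ μ.real (S i)) (hθ1 : θ ≤ 1) (m : ℕ) :
    ∃ Y : Finset U, #Y ≤ m ∧ (#(uncovered S Y) : ℝ) ≤ Fintype.card ι * (1 - θ) ^ m := by
  induction m with
  | zero => exact ⟨∅, le_rfl, by simpa using card_le_univ _⟩
  | succ m ih =>
    obtain ⟨Y, hYcard, hYunc⟩ := ih
    obtain ⟨x, hx⟩ := exists_mul_card_le_card_filter_mem μ hmeas hS (uncovered S Y)
    refine ⟨insert x Y, (card_insert_le x Y).trans (by omega), ?_⟩
    have hsplit := card_filter_add_card_filter_not (s := uncovered S Y) (x ∈ S ·)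
    rw [uncovered_insert, pow_succ]
    calc (#{i ∈ uncovered S Y | x ∉ S i} : ℝ)
        = #(uncovered S Y) - #{i ∈ uncovered S Y | x ∈ S i} := by
          rw [← hsplit]; push_cast; ring
      _ ≤ (1 - θ) * #(uncovered S Y) := by linarith
      _ ≤ (1 - θ) * (Fintype.card ι * (1 - θ) ^ m) :=
          mul_le_mul_of_nonneg_left hYunc (by linarith)
      _ = _ := by ring

theorem exists_cover_card_le_add_card_uncovered {S : ι → Set U} (hne : ∀ i, (S i).Nonempty)
    (Y : Finset U) :
    ∃ Z : Finset U, #Z ≤ #Y + #(uncovered S Y) ∧ ∀ i, ∃ z ∈ Z, z ∈ S i := by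
  choose g hg using hne
  refine ⟨Y ∪ (uncovered S Y).image g,
    (card_union_le _ _).trans (Nat.add_le_add_left card_image_le _), fun i => ?_⟩
  by_cases hi : i ∈ uncovered S Y
  · exact ⟨g i, mem_union_right _ (mem_image_of_mem g hi), hg i⟩
  · simp only [uncovered, mem_filter, mem_univ, true_and, not_forall, not_not] at hi
    obtain ⟨y, hy, hyS⟩ := hi
    exact ⟨y, mem_union_left _ hy, hyS⟩

end Uncovered

end RogersCovering

theorem mul_one_sub_pow_ceil_le_inv {x θ : ℝ} (hθ : 0 < θ) (hθ1 : θ ≤ 1) :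
    x * (1 - θ) ^ ⌈θ⁻¹ * Real.log (x * θ)⌉₊ ≤ θ⁻¹ := by
  set m := ⌈θ⁻¹ * Real.log (x * θ)⌉₊
  have hlog : Real.log (x * θ) ≤ m * θ := by
    linarith [(inv_mul_le_iff₀ hθ).1 (Nat.le_ceil (θ⁻¹ * Real.log (x * θ)))]
  have hpow : (1 - θ) ^ m ≤ Real.exp (-(m * θ)) := by
    rw [← mul_neg, Real.exp_nat_mul]
    exact pow_le_pow_left₀ (by linarith) (Real.one_sub_le_exp_neg θ) m
  rw [← one_div, le_div_iff₀ hθ]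
  calc x * (1 - θ) ^ m * θ = x * θ * (1 - θ) ^ m := by ring
    _ ≤ Real.exp (Real.log (x * θ)) * Real.exp (-(m * θ)) :=
        mul_le_mul (Real.le_exp_log _) hpow (by positivity) (Real.exp_pos _).le
    _ ≤ Real.exp (m * θ) * Real.exp (-(m * θ)) := by gcongr
    _ = 1 := by rw [← Real.exp_add, add_neg_cancel, Real.exp_zero]

/-- Rogers' trick: if `S_1, …, S_N` are measurable subsets of a probability space with
`μ(S_i) ≥ θ > 0` for each `i`, then there is a set `Y` of cardinality at most
`⌈θ⁻¹ log(Nθ)⌉ + θ⁻¹` intersecting every `S_i`. Here `⌈z⌉` is the least nonnegative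
integer `≥ z`. -/
theorem stmt15 {U : Type*} [MeasurableSpace U] (μ : Measure U)
    [IsProbabilityMeasure μ] (N : ℕ) (S : Fin N → Set U)
    (hmeas : ∀ i, MeasurableSet (S i)) (θ : ℝ) (hθ : 0 < θ)
    (hS : ∀ i, ENNReal.ofReal θ ≤ μ (S i)) :
    ∃ Y : Finset U,
      (Y.card : ℝ) ≤ (⌈θ⁻¹ * Real.log ((N : ℝ) * θ)⌉₊ : ℝ) + θ⁻¹ ∧
      ∀ i, ∃ y ∈ Y, y ∈ S i := by
  rcases isEmpty_or_nonempty (Fin N) with hN | ⟨⟨i₀⟩⟩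
  · exact ⟨∅, by simp only [card_empty, Nat.cast_zero]; positivity, isEmptyElim⟩
  have hSreal : ∀ i, θ ≤ μ.real (S i) := fun i =>
    (ENNReal.ofReal_le_iff_le_toReal (measure_ne_top μ _)).1 (hS i)
  have hθ1 : θ ≤ 1 := (hSreal i₀).trans measureReal_le_one
  have hne : ∀ i, (S i).Nonempty := fun i =>
    nonempty_of_measure_ne_zero fun h => by
      have := hSreal i
      rw [measureReal_def, h, ENNReal.toReal_zero] at this
      linarith
  obtain ⟨Y, hYcard, hYunc⟩ :=
    exists_card_le_card_uncovered_le μ hmeas hSreal hθ1 ⌈θ⁻¹ * Real.log (N * θ)⌉₊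
  obtain ⟨Z, hZcard, hZcover⟩ := exists_cover_card_le_add_card_uncovered hne Y
  rw [Fintype.card_fin] at hYunc
  refine ⟨Z, ?_, hZcover⟩
  calc (#Z : ℝ) ≤ #Y + #(uncovered S Y) := by exact_mod_cast hZcard
    _ ≤ _ := add_le_add (by exact_mod_cast hYcard)
        (hYunc.trans (mul_one_sub_pow_ceil_le_inv hθ hθ1))
end
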